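/- Let V and E be finite types with n = |V| and m = |E|, and let src, trg : E → V. Let w = e_1, …, e_N be a path of the associated directed multigraph such that there do not exist indices 1 ≤ j ≤ k < j' ≤ k' ≤ N for which the contiguous segments (e_j, …, e_k) and (e_{j'}, …, e_{k'}) are both simple cycles consisting of the same set of edges (in particular, w contains no two disjoint equal contiguous simple-cycle segments). Then the length of w satisfies N ≤ n · (2^{m+1} + 1). -/

import Mathlib

/-- A path in a directed multigraph: consecutive edges match up. -/
def IsPath {V E : Type*} (src trg : E → V) (w : List E) : Prop :=
  List.Chain' (fun e f => trg e = src f) w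

/-- A simple cycle: a nonempty path whose last target equals its first source,
and whose sources are pairwise distinct. -/
def IsSimpleCycle {V E : Type*} (src trg : E → V) (w : List E) : Prop :=
  w ≠ [] ∧ IsPath src trg w ∧
    w.getLast?.map trg = w.head?.map src ∧
    (w.map src).Nodup

/-- The contiguous segment e_j, …, e_k of a list (0-based indices j ≤ k). -/
def listSegment {E : Type*} (w : List E) (j k : ℕ) : List E :=
  (w.drop j).take (k - j + 1)

/-! Cut `w` into `2 ^ m + 1` consecutive blocks of `n + 1` edges; the bound on the length leaves
room for them since `n ≥ 1`. The `n + 1` sources of a block cannot be distinct, and the segment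
ending just before the first repeated source is a simple cycle. By pigeonhole, two of these
`2 ^ m + 1` disjoint cycles have the same edge set. -/

theorem List.exists_nodup_take_getElem_mem_take {α : Type*} {l : List α} (h : ¬ l.Nodup) :
    ∃ k, ∃ hk : k < l.length, (l.take k).Nodup ∧ l[k] ∈ l.take k := by
  induction l using List.reverseRecOn with
  | nil => exact absurd List.nodup_nil h
  | append_singleton l a ih =>
    by_cases hl : l.Nodup
    · have ha : a ∈ l := by
        by_contra ha
        exact h (by simpa using List.nodup_concat l a |>.2 ⟨ha, hl⟩)
      exact ⟨l.length, by simp, by simpa using hl, by simpa using ha⟩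
    · obtain ⟨k, hk, hnodup, hmem⟩ := ih hl
      refine ⟨k, by simp; omega, ?_, ?_⟩
      · rwa [List.take_append_of_le_length hk.le]
      · rwa [List.take_append_of_le_length hk.le, List.getElem_append_left hk]

section listSegment

variable {E : Type*}

theorem listSegment_infix (w : List E) (j k : ℕ) : listSegment w j k <:+: w :=
  (List.take_prefix _ _).isInfix.trans (List.drop_suffix _ _).isInfix

theorem length_listSegment {w : List E} {j k : ℕ} (hjk : j ≤ k) (hk : k < w.length) :
    (listSegment w j k).length = k - j + 1 := by
  simp only [listSegment, List.length_take, List.length_drop]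
  omega

theorem map_listSegment {F : Type*} (f : E → F) (w : List E) (j k : ℕ) :
    (listSegment w j k).map f = listSegment (w.map f) j k := by
  simp [listSegment]

theorem getElem?_listSegment (w : List E) {j k i : ℕ} (hi : i ≤ k - j) :
    (listSegment w j k)[i]? = w[j + i]? := by
  rw [listSegment, List.getElem?_take, if_pos (by omega), List.getElem?_drop]

theorem head?_listSegment (w : List E) (j k : ℕ) : (listSegment w j k).head? = w[j]? := by
  rw [List.head?_eq_getElem?, getElem?_listSegment w (Nat.zero_le _), Nat.add_zero]

theorem getLast?_listSegment {w : List E} {j k : ℕ} (hjk : j ≤ k) (hk : k < w.length) :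
    (listSegment w j k).getLast? = w[k]? := by
  rw [List.getLast?_eq_getElem?, length_listSegment hjk hk, Nat.add_sub_cancel,
    getElem?_listSegment w le_rfl, Nat.add_sub_cancel' hjk]

theorem listSegment_listSegment (w : List E) {j k a c : ℕ} (hac : a ≤ c) (hc : c ≤ k - j) :
    listSegment (listSegment w j k) a c = listSegment w (j + a) (j + c) := by
  simp only [listSegment, List.drop_take, List.take_take, List.drop_drop]
  congr 1
  omega

end listSegment

section IsPath

variable {V E : Type*} {src trg : E → V} {w : List E}

theorem IsPath.infix (hw : IsPath src trg w) {u : List E} (hu : u <:+: w) : IsPath src trg u :=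
  List.IsChain.infix hw hu

theorem IsPath.isSimpleCycle_listSegment (hw : IsPath src trg w) {i k : ℕ} (hik : i ≤ k)
    (hk : k + 1 < w.length) (hsrc : src w[i] = src w[k + 1])
    (hnodup : (listSegment (w.map src) i k).Nodup) :
    IsSimpleCycle src trg (listSegment w i k) := by
  refine ⟨?_, hw.infix (listSegment_infix w i k), ?_, ?_⟩
  · rw [← List.length_pos_iff, length_listSegment hik (by omega)]
    omega
  · rw [getLast?_listSegment hik (by omega), head?_listSegment,
      List.getElem?_eq_getElem (by omega), List.getElem?_eq_getElem (by omega),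
      Option.map_some, Option.map_some, List.isChain_iff_getElem.1 hw k hk, hsrc]
  · rwa [map_listSegment]

theorem IsPath.exists_isSimpleCycle_listSegment [Fintype V] (hw : IsPath src trg w)
    (hlen : Fintype.card V < w.length) :
    ∃ j k, j ≤ k ∧ k < w.length ∧ IsSimpleCycle src trg (listSegment w j k) := by
  have hdup : ¬ (w.map src).Nodup := fun h => by
    have := h.length_le_card
    rw [List.length_map] at this
    omega
  obtain ⟨K, hK, hnodup, hmem⟩ := List.exists_nodup_take_getElem_mem_take hdup
  obtain ⟨i, hi, hiK⟩ := List.getElem_of_mem hmem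
  simp only [List.length_take, List.length_map] at hi hK
  obtain ⟨k, rfl⟩ : ∃ k, K = k + 1 := Nat.exists_eq_succ_of_ne_zero (by omega)
  have hsegment : (listSegment (w.map src) i k).Sublist ((w.map src).take (k + 1)) := by
    rw [listSegment, List.take_drop, show i + (k - i + 1) = k + 1 by omega]
    exact List.drop_sublist i _
  refine ⟨i, k, by omega, by omega, hw.isSimpleCycle_listSegment (by omega) hK ?_ ?_⟩
  · simpa using hiK
  · exact hnodup.sublist hsegment

theorem IsPath.exists_isSimpleCycle_listSegment_of_add_card_lt [Fintype V]
    (hw : IsPath src trg w) {a : ℕ} (ha : a + Fintype.card V < w.length) :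
    ∃ j k, a ≤ j ∧ j ≤ k ∧ k ≤ a + Fintype.card V ∧
      IsSimpleCycle src trg (listSegment w j k) := by
  have hlen := length_listSegment (Nat.le_add_right a (Fintype.card V)) ha
  have hblock := hw.infix (listSegment_infix w a (a + Fintype.card V))
  obtain ⟨j, k, hjk, hk, hcycle⟩ := hblock.exists_isSimpleCycle_listSegment (by omega)
  rw [listSegment_listSegment w hjk (by omega)] at hcycle
  exact ⟨a + j, a + k, by omega, by omega, by omega, hcycle⟩

theorem IsPath.exists_isSimpleCycle_listSegment_family [Fintype V] (hw : IsPath src trg w)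
    {r : ℕ} (hr : r * (Fintype.card V + 1) ≤ w.length) :
    ∃ J K : Fin r → ℕ, (∀ i, J i ≤ K i ∧ K i < w.length ∧
      IsSimpleCycle src trg (listSegment w (J i) (K i))) ∧ ∀ i i', i < i' → K i < J i' := by
  set b := Fintype.card V + 1
  have hblock (i : Fin r) : (i : ℕ) * b + Fintype.card V < w.length := by
    have := Nat.mul_le_mul_right b (Nat.succ_le_of_lt i.isLt)
    rw [Nat.succ_mul] at this
    omega
  choose J K hJ hJK hK hcycle using
    fun i => hw.exists_isSimpleCycle_listSegment_of_add_card_lt (hblock i)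
  refine ⟨J, K, fun i => ⟨hJK i, (hK i).trans_lt (hblock i), hcycle i⟩, fun i i' hlt => ?_⟩
  have := Nat.mul_le_mul_right b (Nat.succ_le_of_lt hlt)
  rw [Nat.succ_mul] at this
  have := hK i
  have := hJ i'
  omega

end IsPath

theorem length_le_of_no_repeated_simple_cycle_segment
    {V E : Type*} [Fintype V] [Fintype E] (src trg : E → V)
    (w : List E) (hw : IsPath src trg w)
    (hno : ¬ ∃ j k j' k' : ℕ, j ≤ k ∧ k < j' ∧ j' ≤ k' ∧ k' < w.length ∧
      IsSimpleCycle src trg (listSegment w j k) ∧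
      IsSimpleCycle src trg (listSegment w j' k') ∧
      (∀ e, e ∈ listSegment w j k ↔ e ∈ listSegment w j' k')) :
    w.length ≤ Fintype.card V * (2 ^ (Fintype.card E + 1) + 1) := by
  classical
  by_contra! hlong
  obtain ⟨e, -⟩ := List.exists_mem_of_length_pos (by omega : 0 < w.length)
  have hV : 0 < Fintype.card V := Fintype.card_pos_iff.2 ⟨src e⟩
  have hblocks : (2 ^ Fintype.card E + 1) * (Fintype.card V + 1) ≤ w.length := by
    rw [pow_succ] at hlong
    nlinarith [Nat.mul_le_mul_right (2 ^ Fintype.card E) hV]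
  obtain ⟨J, K, hcycle, hsep⟩ := hw.exists_isSimpleCycle_listSegment_family hblocks
  obtain ⟨i, i', hne, hedges⟩ := Fintype.exists_ne_map_eq_of_card_lt
    (fun i => (listSegment w (J i) (K i)).toFinset) (by simp)
  wlog hlt : i < i' generalizing i i'
  · exact this i' i hne.symm hedges.symm (hne.lt_or_gt.resolve_left hlt)
  refine hno ⟨J i, K i, J i', K i', (hcycle i).1, hsep i i' hlt, (hcycle i').1, (hcycle i').2.1,
    (hcycle i).2.2, (hcycle i').2.2, fun e => ?_⟩
  simpa using Finset.ext_iff.1 hedges e
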